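/- Let p be a prime, let m, w, n be natural numbers with 1 ≤ m < p and n = m + pw, let γ be a partition of m, and let a be a natural number with ⌊(w+1)/2⌋ + 1 ≤ a ≤ w. Set λ = γ⋆(ap, (w−a)p) and μ = γ⋆((a−1)p, (w−a+1)p), both partitions of n. Then π(λ) > π(μ); equivalently, by the hook length formula, the irreducible character degrees of the symmetric group S_n satisfy χ^λ(1) = n!/π(λ) < n!/π(μ) = χ^μ(1). -/

import Mathlib

/-!
Write `γ = (g, T)`, `μ = γ⋆(x, y + p)` and `λ = γ⋆(x + p, y)`, where `x = (a-1)p ≥ y + p` and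
`y = (w-a)p`. The hook product of `γ⋆(x, y)` is the product of the corner hook (a function of
`x + y`), the hooks of the other cells of the first row of `γ` (each increasing in `x`), `x!`,
`y!`, the hooks `h_t + y` in the first column below the corner, where the `h_t` are the
first-column hooks of `T`, and the remaining hooks of `T`, which do not depend on `x, y`.
As `|γ| < p`, the `h_t` are fewer than `p` distinct elements of `{1, …, p}`, whence
`(y+1)⋯(y+p) · ∏ (h_t + y + p) < (y+p+1)⋯(y+2p) · ∏ (h_t + y) ≤ (x+1)⋯(x+p) · ∏ (h_t + y)`,
which is `π(μ) < π(λ)`.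

The degree statement needs `π(λ) ∣ n!`. If `h_i` are the first-column hooks of `λ`, then
`π(λ) · ∏_{i<j} (h_i - h_j) = ∏ h_i!` (Frobenius), while `∏_{i<j} (h_j - h_i)` is the
determinant of `(h_i (h_i - 1) ⋯ (h_i - j + 1))_{i,j}`, and `n!` times each term of its expansion
is a multinomial coefficient times `∏ h_i!`.
-/

/-- The hook length of the cell in (0-based) row `i` and column `j` of the Young diagram of
the partition whose parts are given by the list `L`: with 1-based indices `(i+1, j+1)`,
this is `(λ_{i+1} - (j+1)) + (λ'_{j+1} - (i+1)) + 1`, where `λ'_{j+1}` is the number of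
parts of size at least `j+1`. -/
def hook (L : List ℕ) (i j : ℕ) : ℕ :=
  (L.getD i 0 - (j + 1)) + (L.countP (fun a => decide (j + 1 ≤ a)) - (i + 1)) + 1

/-- The product `π(λ)` of all hook lengths of the partition `λ` given by the list `L`. -/
def hookProd (L : List ℕ) : ℕ :=
  ∏ i ∈ Finset.range L.length, ∏ j ∈ Finset.range (L.getD i 0), hook L i j

/-- `γ ⋆ (x, y)`: add `x` to the first part of `γ` and append `y` trailing parts equal to `1`. -/
def starPartition (L : List ℕ) (x y : ℕ) : List ℕ :=
  (L.headD 0 + x) :: (L.tail ++ List.replicate y 1)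

open Finset
open scoped Nat

/-- The parts of the conjugate partition: `colLength L t = λ'_t`. -/
def colLength (L : List ℕ) (t : ℕ) : ℕ := L.countP (fun a => decide (t ≤ a))

theorem hook_def (L : List ℕ) (i j : ℕ) :
    hook L i j = (L.getD i 0 - (j + 1)) + (colLength L (j + 1) - (i + 1)) + 1 := rfl

theorem hook_pos (L : List ℕ) (i j : ℕ) : 0 < hook L i j := Nat.succ_pos _

theorem colLength_cons (a : ℕ) (L : List ℕ) (t : ℕ) :
    colLength (a :: L) t = colLength L t + if t ≤ a then 1 else 0 := by
  simp [colLength, List.countP_cons]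

theorem colLength_append (L L' : List ℕ) (t : ℕ) :
    colLength (L ++ L') t = colLength L t + colLength L' t :=
  List.countP_append ..

theorem colLength_le_length (L : List ℕ) (t : ℕ) : colLength L t ≤ L.length :=
  List.countP_le_length

theorem colLength_antitone (L : List ℕ) : Antitone (colLength L) := fun _ _ h =>
  List.countP_mono_left fun b _ hb => by simp only [decide_eq_true_eq] at hb ⊢; omega

theorem colLength_eq_length {L : List ℕ} {t : ℕ} (h : ∀ b ∈ L, t ≤ b) :
    colLength L t = L.length :=
  List.countP_eq_length.mpr fun b hb => decide_eq_true (h b hb)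

theorem colLength_eq_zero {L : List ℕ} {t : ℕ} (h : ∀ b ∈ L, b < t) : colLength L t = 0 :=
  List.countP_eq_zero.mpr fun b hb => by simpa using h b hb

theorem hook_cons_zero (a : ℕ) (L : List ℕ) {j : ℕ} (hj : j < a) :
    hook (a :: L) 0 j = (a - j) + colLength L (j + 1) := by
  rw [hook_def, List.getD_cons_zero, colLength_cons, if_pos (by omega)]
  omega

section Sorted

variable {L : List ℕ}

theorem getD_le_getD_of_pairwise (hs : L.Pairwise (· ≥ ·)) {i j : ℕ} (h : i ≤ j) :
    L.getD j 0 ≤ L.getD i 0 := by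
  by_cases hj : j < L.length
  · rw [List.getD_eq_getElem _ _ (lt_of_le_of_lt h hj), List.getD_eq_getElem _ _ hj]
    rcases h.lt_or_eq with hij | rfl
    · exact hs.rel_get_of_lt (a := ⟨i, lt_of_le_of_lt h hj⟩) (b := ⟨j, hj⟩) hij
    · exact le_rfl
  · rw [List.getD_eq_default _ _ (by omega)]
    exact Nat.zero_le _

theorem getD_le_of_pairwise_cons {a : ℕ} (hs : (a :: L).Pairwise (· ≥ ·)) (i : ℕ) :
    L.getD i 0 ≤ a := by
  simpa using getD_le_getD_of_pairwise hs (Nat.zero_le (i + 1))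

theorem le_colLength_of_le_getD (hs : L.Pairwise (· ≥ ·)) {i t : ℕ} (hi : i < L.length)
    (ht : t ≤ L.getD i 0) : i + 1 ≤ colLength L t := by
  induction L generalizing i with
  | nil => simp at hi
  | cons a T ih =>
    rcases i with _ | i
    · rw [colLength_cons, if_pos (by simpa using ht)]
      omega
    · simp only [List.getD_cons_succ, List.length_cons, Nat.add_lt_add_iff_right] at ht hi
      have hta : t ≤ a := ht.trans (getD_le_of_pairwise_cons hs i)
      have := ih hs.of_cons hi ht
      rw [colLength_cons, if_pos hta]
      omega

theorem colLength_le_of_getD_lt (hs : L.Pairwise (· ≥ ·)) {i t : ℕ} (ht : L.getD i 0 < t) :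
    colLength L t ≤ i := by
  induction L generalizing i with
  | nil => exact Nat.zero_le _
  | cons a T ih =>
    rcases i with _ | i
    · simp only [List.getD_cons_zero] at ht
      rw [colLength_eq_zero]
      intro b hb
      rcases List.mem_cons.mp hb with rfl | hb
      · exact ht
      · exact lt_of_le_of_lt (List.rel_of_pairwise_cons hs hb) ht
    · simp only [List.getD_cons_succ] at ht
      have := ih hs.of_cons ht
      rw [colLength_cons]
      split <;> omega

theorem hook_cons_succ {a : ℕ} (hs : (a :: L).Pairwise (· ≥ ·)) {i j : ℕ}
    (hj : j < L.getD i 0) : hook (a :: L) (i + 1) j = hook L i j := by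
  have := getD_le_of_pairwise_cons hs i
  rw [hook_def, hook_def, List.getD_cons_succ, colLength_cons, if_pos (by omega)]
  omega

theorem hookProd_cons {a : ℕ} (hs : (a :: L).Pairwise (· ≥ ·)) :
    hookProd (a :: L) = (∏ j ∈ range a, hook (a :: L) 0 j) * hookProd L := by
  rw [hookProd, List.length_cons, prod_range_succ', mul_comm]
  congr 1
  exact prod_congr rfl fun i _ => prod_congr rfl fun j hj =>
    hook_cons_succ hs (mem_range.mp hj)

end Sorted

def firstColHook (L : List ℕ) (i : ℕ) : ℕ := L.getD i 0 + (L.length - (i + 1))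

def firstColHookVandermonde (L : List ℕ) : ℕ :=
  ∏ i : Fin L.length, ∏ j ∈ Ioi i, (firstColHook L i - firstColHook L j)

theorem firstColHook_cons_zero (a : ℕ) (L : List ℕ) : firstColHook (a :: L) 0 = a + L.length := by
  simp [firstColHook]

theorem firstColHook_cons_succ (a : ℕ) (L : List ℕ) (i : ℕ) :
    firstColHook (a :: L) (i + 1) = firstColHook L i := by
  simp [firstColHook]

theorem sum_firstColHook (L : List ℕ) :
    ∑ i : Fin L.length, firstColHook L i = L.sum + ∑ i : Fin L.length, (i : ℕ) := by
  induction L with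
  | nil => simp
  | cons a T ih =>
    simp only [List.length_cons, Fin.sum_univ_succ, Fin.val_zero, Fin.val_succ,
      firstColHook_cons_zero, firstColHook_cons_succ, ih, sum_add_distrib, List.sum_cons,
      sum_const, card_univ, Fintype.card_fin, smul_eq_mul, mul_one]
    ring

theorem firstColHookVandermonde_cons (a : ℕ) (L : List ℕ) :
    firstColHookVandermonde (a :: L) =
      (∏ i ∈ range L.length, (a + L.length - firstColHook L i)) * firstColHookVandermonde L := by
  simp only [firstColHookVandermonde, List.length_cons, Fin.prod_univ_succ, Fin.prod_Ioi_zero,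
    Fin.prod_Ioi_succ, Fin.val_zero, Fin.val_succ, firstColHook_cons_zero, firstColHook_cons_succ,
    Fin.prod_univ_eq_prod_range (fun i => a + L.length - firstColHook L i)]

section Sorted

variable {L : List ℕ}

theorem firstColHook_strictAntiOn (hs : L.Pairwise (· ≥ ·)) :
    StrictAntiOn (firstColHook L) (Set.Iio L.length) := fun i _ j hj hij => by
  have := getD_le_getD_of_pairwise hs hij.le
  simp only [Set.mem_Iio] at hj
  simp only [firstColHook]
  omega

theorem firstColHookVandermonde_pos (hs : L.Pairwise (· ≥ ·)) : 0 < firstColHookVandermonde L :=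
  prod_pos fun i _ => prod_pos fun j hj => Nat.sub_pos_of_lt <|
    firstColHook_strictAntiOn hs i.isLt j.isLt (Fin.lt_def.mp (mem_Ioi.mp hj))

end Sorted

theorem prod_id_mul_prod_id_eq_factorial {s t : Finset ℕ} {N : ℕ} (hst : Disjoint s t)
    (hsub : s ∪ t ⊆ Icc 1 N) (hcard : #s + #t = N) : (∏ k ∈ s, k) * ∏ k ∈ t, k = N ! := by
  rw [← prod_union hst, eq_of_subset_of_card_le hsub (by simp [card_union_of_disjoint hst, hcard]),
    ← Ico_add_one_right_eq_Icc, prod_Ico_id_eq_factorial]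

theorem prod_hook_zero_mul_prod_sub_firstColHook {a : ℕ} {T : List ℕ}
    (hs : (a :: T).Pairwise (· ≥ ·)) :
    (∏ j ∈ range a, hook (a :: T) 0 j) * ∏ i ∈ range T.length, (a + T.length - firstColHook T i)
      = (a + T.length)! := by
  have hsT := hs.of_cons
  have hTa := getD_le_of_pairwise_cons hs
  set f : ℕ → ℕ := fun j => (a - j) + colLength T (j + 1)
  set g : ℕ → ℕ := fun i => (a - T.getD i 0) + i + 1
  have hf : StrictAntiOn f (range a) := fun j₁ _ j₂ h₂ h => by
    have := colLength_antitone T (show j₁ + 1 ≤ j₂ + 1 by omega)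
    simp only [coe_range, Set.mem_Iio] at h₂
    simp only [f]
    omega
  have hg : StrictMono g := fun i₁ i₂ h => by
    have := getD_le_getD_of_pairwise hsT h.le
    have := hTa i₁
    simp only [g]
    omega
  -- the first-row hooks and the `a + T.length - h_i` are complementary in `[1, a + T.length]`
  have hfg (j : ℕ) (hj : j < a) (i : ℕ) (hi : i < T.length) : f j ≠ g i := by
    have := hTa i
    by_cases hji : j + 1 ≤ T.getD i 0
    · have := le_colLength_of_le_getD hsT hi hji
      simp only [f, g]
      omega
    · have := colLength_le_of_getD_lt hsT (show T.getD i 0 < j + 1 by omega)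
      simp only [f, g]
      omega
  calc _ = (∏ k ∈ (range a).image f, k) * ∏ k ∈ (range T.length).image g, k := by
        rw [prod_image hf.injOn, prod_image hg.injective.injOn]
        congr 1
        · exact prod_congr rfl fun j hj => hook_cons_zero a T (mem_range.mp hj)
        · refine prod_congr rfl fun i hi => ?_
          have := hTa i
          have := mem_range.mp hi
          simp only [firstColHook, g]
          omega
    _ = _ := by
      refine prod_id_mul_prod_id_eq_factorial ?_ ?_ ?_
      · simp only [disjoint_left, mem_image, mem_range, not_exists, not_and]
        rintro _ ⟨j, hj, rfl⟩ i hi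
        exact (hfg j hj i hi).symm
      · intro k hk
        simp only [mem_union, mem_image, mem_range] at hk
        rcases hk with ⟨j, hj, rfl⟩ | ⟨i, hi, rfl⟩
        · have := colLength_le_length T (j + 1)
          simp only [f, mem_Icc]
          omega
        · simp only [g, mem_Icc]
          omega
      · rw [card_image_of_injOn hf.injOn, card_image_of_injOn hg.injective.injOn, card_range,
          card_range]

theorem hookProd_mul_firstColHookVandermonde {L : List ℕ} (hs : L.Pairwise (· ≥ ·)) :
    hookProd L * firstColHookVandermonde L = ∏ i : Fin L.length, (firstColHook L i)! := by
  induction L with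
  | nil => simp [hookProd, firstColHookVandermonde]
  | cons a T ih =>
    rw [hookProd_cons hs, firstColHookVandermonde_cons, List.length_cons, Fin.prod_univ_succ]
    simp only [Fin.val_zero, Fin.val_succ, firstColHook_cons_zero, firstColHook_cons_succ]
    rw [← ih hs.of_cons, ← prod_hook_zero_mul_prod_sub_firstColHook hs]
    ring

theorem prod_factorial_dvd_factorial_mul_prod_descFactorial {R n : ℕ} {h : Fin R → ℕ}
    (hsum : ∑ i, h i = n + ∑ i : Fin R, (i : ℕ)) (σ : Equiv.Perm (Fin R)) :
    ∏ i, (h i)! ∣ n ! * ∏ i, (h (σ i)).descFactorial i := by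
  by_cases hle : ∀ i : Fin R, (i : ℕ) ≤ h (σ i)
  · have hsum' : ∑ i, (h (σ i) - i) = n := by
      rw [sum_tsub_distrib _ fun i _ => hle i, Equiv.sum_comp σ h, hsum]
      omega
    calc ∏ i, (h i)! = (∏ i, (h (σ i) - i)!) * ∏ i, (h (σ i)).descFactorial i := by
          rw [← prod_mul_distrib, ← Equiv.prod_comp σ]
          exact prod_congr rfl fun i _ => (Nat.factorial_mul_descFactorial (hle i)).symm
      _ ∣ n ! * ∏ i, (h (σ i)).descFactorial i :=
          mul_dvd_mul_right (hsum' ▸ Nat.prod_factorial_dvd_factorial_sum _ _) _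
  · obtain ⟨i, hi⟩ := not_forall.mp hle
    have : ∏ i, (h (σ i)).descFactorial i = 0 :=
      prod_eq_zero (mem_univ i) (Nat.descFactorial_eq_zero_iff_lt.mpr (by omega))
    rw [this, mul_zero]
    exact dvd_zero _

theorem prod_factorial_dvd_factorial_mul_det_vandermonde {R n : ℕ} {h : Fin R → ℕ}
    (hsum : ∑ i, h i = n + ∑ i : Fin R, (i : ℕ)) :
    ((∏ i, (h i)! : ℕ) : ℤ) ∣ n ! * (Matrix.vandermonde fun i => (h i : ℤ)).det := by
  rw [Matrix.det_eval_matrixOfPolynomials_eq_det_vandermonde _ (fun j => descPochhammer ℤ j)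
    (fun j => descPochhammer_natDegree ℤ j) (fun j => monic_descPochhammer ℤ j),
    Matrix.det_apply', mul_sum]
  refine dvd_sum fun σ _ => ?_
  simp only [Matrix.of_apply, descPochhammer_eval_eq_descFactorial]
  rw [mul_left_comm]
  refine Dvd.dvd.mul_left ?_ _
  exact_mod_cast prod_factorial_dvd_factorial_mul_prod_descFactorial hsum σ

theorem natAbs_det_vandermonde_firstColHook {L : List ℕ} (hs : L.Pairwise (· ≥ ·)) :
    (Matrix.vandermonde fun i : Fin L.length => (firstColHook L i : ℤ)).det.natAbs =
      firstColHookVandermonde L := by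
  rw [Matrix.det_vandermonde, firstColHookVandermonde]
  change Int.natAbsHom _ = _
  rw [map_prod]
  refine prod_congr rfl fun i _ => ?_
  rw [map_prod]
  refine prod_congr rfl fun j hj => ?_
  have := firstColHook_strictAntiOn hs i.isLt j.isLt (Fin.lt_def.mp (mem_Ioi.mp hj))
  change ((firstColHook L j : ℤ) - firstColHook L i).natAbs = _
  omega

theorem hookProd_dvd_factorial_sum {L : List ℕ} (hs : L.Pairwise (· ≥ ·)) :
    hookProd L ∣ L.sum ! := by
  have h := Int.natAbs_dvd_natAbs.mpr
    (prod_factorial_dvd_factorial_mul_det_vandermonde (sum_firstColHook L))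
  rw [Int.natAbs_mul, Int.natAbs_natCast, Int.natAbs_natCast,
    natAbs_det_vandermonde_firstColHook hs, ← hookProd_mul_firstColHookVandermonde hs] at h
  exact Nat.dvd_of_mul_dvd_mul_right (firstColHookVandermonde_pos hs) h

theorem colLength_append_replicate_one (L : List ℕ) (y : ℕ) {t : ℕ} (ht : 2 ≤ t) :
    colLength (L ++ List.replicate y 1) t = colLength L t := by
  rw [colLength_append, colLength_eq_zero (L := List.replicate y 1) fun b hb => by
    rw [List.eq_of_mem_replicate hb]; omega, add_zero]

theorem colLength_one_append_replicate_one {L : List ℕ} (hpos : ∀ b ∈ L, 0 < b) (y : ℕ) :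
    colLength (L ++ List.replicate y 1) 1 = L.length + y := by
  rw [colLength_eq_length fun b hb => ?_, List.length_append, List.length_replicate]
  rcases List.mem_append.mp hb with hb | hb
  · exact hpos b hb
  · rw [List.eq_of_mem_replicate hb]

def rowTailHookProd (L : List ℕ) (i : ℕ) : ℕ := ∏ j ∈ range (L.getD i 0 - 1), hook L i (j + 1)

theorem hookProd_append_replicate_one {T : List ℕ} (hpos : ∀ b ∈ T, 0 < b) (y : ℕ) :
    hookProd (T ++ List.replicate y 1) =
      (∏ t ∈ range T.length, (firstColHook T t + y) * rowTailHookProd T t) * y ! := by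
  set R := T ++ List.replicate y 1
  have hrow (t : ℕ) (ht : t < T.length) :
      ∏ j ∈ range (R.getD t 0), hook R t j = (firstColHook T t + y) * rowTailHookProd T t := by
    have hRt : R.getD t 0 = T.getD t 0 := List.getD_append _ _ _ _ ht
    obtain ⟨r, hr⟩ : ∃ r, T.getD t 0 = r + 1 := Nat.exists_eq_add_one.mpr <| by
      rw [List.getD_eq_getElem _ _ ht]
      exact hpos _ (List.getElem_mem _)
    rw [hRt, hr, prod_range_succ', rowTailHookProd, hr, Nat.add_sub_cancel, mul_comm]
    congr 1
    · rw [hook_def, hRt, hr, colLength_one_append_replicate_one hpos, firstColHook, hr]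
      omega
    · refine prod_congr rfl fun j _ => ?_
      rw [hook_def, hook_def, hRt, colLength_append_replicate_one _ _ (by omega)]
  have hone (k : ℕ) (hk : k < y) :
      ∏ j ∈ range (R.getD (T.length + k) 0), hook R (T.length + k) j = y - k := by
    have hRk : R.getD (T.length + k) 0 = 1 := by
      rw [List.getD_append_right _ _ _ _ (by omega), Nat.add_sub_cancel_left,
        List.getD_replicate (h := hk)]
    rw [hRk, prod_range_one, hook_def, hRk, colLength_one_append_replicate_one hpos]
    omega
  rw [hookProd, List.length_append, List.length_replicate, prod_range_add,
    prod_congr rfl fun t ht => hrow t (mem_range.mp ht),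
    prod_congr rfl fun k hk => hone k (mem_range.mp hk), ← Nat.descFactorial_eq_prod_range,
    Nat.descFactorial_self]

theorem factorial_add_eq_mul_prod_Ioc (n p : ℕ) : (n + p)! = n ! * ∏ k ∈ Ioc 0 p, (k + n) := by
  induction p with
  | zero => simp
  | succ p ih =>
    rw [prod_Ioc_succ_top (Nat.zero_le p), ← mul_assoc, ← ih, ← add_assoc, Nat.factorial_succ]
    ring

theorem prod_add_mul_prod_add_lt {U S : Finset ℕ} (hSU : S ⊂ U) (hU : ∀ k ∈ U, 0 < k)
    {y p : ℕ} (hp : 0 < p) :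
    (∏ k ∈ U, (k + y)) * ∏ k ∈ S, (k + (y + p)) < (∏ k ∈ U, (k + (y + p))) * ∏ k ∈ S, (k + y) := by
  have hS : ∀ k ∈ S, 0 < k := fun k hk => hU k (hSU.subset hk)
  have hlt : ∏ k ∈ U \ S, (k + y) < ∏ k ∈ U \ S, (k + (y + p)) :=
    prod_lt_prod_of_nonempty (fun k hk => by have := hU k (mem_sdiff.mp hk).1; omega)
      (fun k _ => by omega) (sdiff_nonempty.mpr hSU.2)
  have hpos : 0 < (∏ k ∈ S, (k + y)) * ∏ k ∈ S, (k + (y + p)) :=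
    Nat.mul_pos (prod_pos fun k hk => by have := hS k hk; omega)
      (prod_pos fun k hk => by have := hS k hk; omega)
  rw [← prod_sdiff hSU.subset, ← prod_sdiff hSU.subset (f := fun k => k + (y + p))]
  calc _ = (∏ k ∈ U \ S, (k + y)) * ((∏ k ∈ S, (k + y)) * ∏ k ∈ S, (k + (y + p))) := by ring
    _ < (∏ k ∈ U \ S, (k + (y + p))) * ((∏ k ∈ S, (k + y)) * ∏ k ∈ S, (k + (y + p))) :=
      Nat.mul_lt_mul_of_pos_right hlt hpos
    _ = _ := by ring

section StarPartition

variable {g : ℕ} {T : List ℕ}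

theorem starPartition_cons (g : ℕ) (T : List ℕ) (x y : ℕ) :
    starPartition (g :: T) x y = (g + x) :: (T ++ List.replicate y 1) := rfl

theorem sum_starPartition (x y : ℕ) :
    (starPartition (g :: T) x y).sum = (g :: T).sum + x + y := by
  simp only [starPartition_cons, List.sum_cons, List.sum_append, List.sum_replicate, smul_eq_mul,
    mul_one]
  omega

theorem pairwise_starPartition (hs : (g :: T).Pairwise (· ≥ ·)) (hpos : ∀ c ∈ g :: T, 0 < c)
    (x y : ℕ) : (starPartition (g :: T) x y).Pairwise (· ≥ ·) := by
  have hg := hpos g List.mem_cons_self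
  rw [starPartition_cons, List.pairwise_cons, List.pairwise_append, List.pairwise_replicate]
  refine ⟨fun b hb => ?_, hs.of_cons, Or.inr le_rfl, fun b hb c hc => ?_⟩
  · rcases List.mem_append.mp hb with hb | hb
    · exact le_add_right (List.rel_of_pairwise_cons hs hb)
    · rw [List.eq_of_mem_replicate hb]
      omega
  · rw [List.eq_of_mem_replicate hc]
    exact hpos b (List.mem_cons_of_mem _ hb)

theorem prod_hook_starPartition_zero (hs : (g :: T).Pairwise (· ≥ ·)) (hpos : ∀ c ∈ g :: T, 0 < c)
    (x y : ℕ) :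
    ∏ j ∈ range (g + x), hook (starPartition (g :: T) x y) 0 j =
      (g + x + y + T.length) * (∏ j ∈ range (g - 1), (g - (j + 1) + x + colLength T (j + 2))) *
        x ! := by
  have hTpos : ∀ b ∈ T, 0 < b := fun b hb => hpos b (List.mem_cons_of_mem _ hb)
  have hTg : ∀ b ∈ T, b ≤ g := fun b hb => List.rel_of_pairwise_cons hs hb
  obtain ⟨g', rfl⟩ : ∃ g', g = g' + 1 := Nat.exists_eq_add_one.mpr (hpos g List.mem_cons_self)
  rw [starPartition_cons, prod_congr rfl fun j hj => hook_cons_zero _ _ (mem_range.mp hj),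
    show g' + 1 + x = g' + x + 1 by ring, prod_range_succ', prod_range_add]
  have harm : ∏ j ∈ range g',
      (g' + x + 1 - (j + 1) + colLength (T ++ List.replicate y 1) (j + 1 + 1)) =
        ∏ j ∈ range g', (g' + 1 - (j + 1) + x + colLength T (j + 2)) :=
    prod_congr rfl fun j hj => by
      rw [colLength_append_replicate_one _ _ (by omega)]
      have := mem_range.mp hj
      show _ + colLength T (j + 2) = _
      omega
  have hleg : ∏ j ∈ range x,
      (g' + x + 1 - (g' + j + 1) + colLength (T ++ List.replicate y 1) (g' + j + 1 + 1)) = x ! := by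
    rw [← Nat.descFactorial_self, Nat.descFactorial_eq_prod_range]
    refine prod_congr rfl fun j _ => ?_
    rw [colLength_append_replicate_one _ _ (by omega),
      colLength_eq_zero fun b hb => by have := hTg b hb; omega]
    omega
  rw [harm, hleg, colLength_one_append_replicate_one hTpos, Nat.add_sub_cancel, Nat.sub_zero]
  ring

theorem hookProd_starPartition (hs : (g :: T).Pairwise (· ≥ ·)) (hpos : ∀ c ∈ g :: T, 0 < c)
    (x y : ℕ) :
    hookProd (starPartition (g :: T) x y) =
      (g + x + y + T.length) * (∏ j ∈ range (g - 1), (g - (j + 1) + x + colLength T (j + 2))) *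
        x ! * ((∏ t ∈ range T.length, (firstColHook T t + y) * rowTailHookProd T t) * y !) := by
  have hs' := pairwise_starPartition hs hpos x y
  rw [starPartition_cons] at hs' ⊢
  rw [hookProd_cons hs', ← starPartition_cons, prod_hook_starPartition_zero hs hpos,
    hookProd_append_replicate_one fun b hb => hpos b (List.mem_cons_of_mem _ hb)]

theorem factorial_mul_prod_firstColHook_add_lt (hs : T.Pairwise (· ≥ ·)) (hpos : ∀ b ∈ T, 0 < b)
    {p x y : ℕ} (hle : ∀ t < T.length, firstColHook T t ≤ p) (hlen : T.length < p)
    (hxy : y + p ≤ x) :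
    x ! * (∏ t ∈ range T.length, (firstColHook T t + (y + p))) * (y + p)! <
      (x + p)! * (∏ t ∈ range T.length, (firstColHook T t + y)) * y ! := by
  have hinj : Set.InjOn (firstColHook T) (range T.length) := by
    rw [coe_range]
    exact (firstColHook_strictAntiOn hs).injOn
  set S := (range T.length).image (firstColHook T)
  have hSU : S ⊂ Ioc 0 p := by
    refine Finset.ssubset_iff_subset_ne.mpr ⟨fun k hk => ?_, fun h => ?_⟩
    · obtain ⟨t, ht, rfl⟩ := mem_image.mp hk
      have ht := mem_range.mp ht
      have := hpos _ (List.getD_eq_getElem T 0 ht ▸ List.getElem_mem ht)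
      refine mem_Ioc.mpr ⟨?_, hle t ht⟩
      simp only [firstColHook]
      omega
    · have := congrArg card h
      rw [card_image_of_injOn hinj, card_range, Nat.card_Ioc] at this
      omega
  have hprod (c : ℕ) : ∏ t ∈ range T.length, (firstColHook T t + c) = ∏ k ∈ S, (k + c) :=
    (prod_image (f := fun k => k + c) hinj).symm
  have hcore := prod_add_mul_prod_add_lt hSU (fun k hk => (mem_Ioc.mp hk).1) (y := y)
    (by omega : 0 < p)
  have hx : ∏ k ∈ Ioc 0 p, (k + (y + p)) ≤ ∏ k ∈ Ioc 0 p, (k + x) :=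
    prod_le_prod' fun k _ => by omega
  rw [hprod, hprod, factorial_add_eq_mul_prod_Ioc y p, factorial_add_eq_mul_prod_Ioc x p]
  calc _ = x ! * y ! * ((∏ k ∈ Ioc 0 p, (k + y)) * ∏ k ∈ S, (k + (y + p))) := by ring
    _ < x ! * y ! * ((∏ k ∈ Ioc 0 p, (k + (y + p))) * ∏ k ∈ S, (k + y)) :=
      Nat.mul_lt_mul_of_pos_left hcore (by positivity)
    _ ≤ x ! * y ! * ((∏ k ∈ Ioc 0 p, (k + x)) * ∏ k ∈ S, (k + y)) := by gcongr
    _ = _ := by ring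

theorem hookProd_starPartition_lt {p x y : ℕ} (hs : (g :: T).Pairwise (· ≥ ·))
    (hpos : ∀ c ∈ g :: T, 0 < c) (hp : (g :: T).sum < p) (hxy : y + p ≤ x) :
    hookProd (starPartition (g :: T) x (y + p)) < hookProd (starPartition (g :: T) (x + p) y) := by
  have hTpos : ∀ b ∈ T, 0 < b := fun b hb => hpos b (List.mem_cons_of_mem _ hb)
  have hg : 0 < g := hpos g List.mem_cons_self
  have hTsum := List.length_le_sum_of_one_le T hTpos
  rw [List.sum_cons] at hp
  have hle (t : ℕ) (ht : t < T.length) : firstColHook T t ≤ p := by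
    have := firstColHook_strictAntiOn hs (by simp : 0 < (g :: T).length)
      (by simpa using ht : t + 1 < (g :: T).length) (Nat.succ_pos t)
    rw [firstColHook_cons_succ, firstColHook_cons_zero] at this
    omega
  have key := factorial_mul_prod_firstColHook_add_lt hs.of_cons hTpos hle (by omega) hxy
  rw [hookProd_starPartition hs hpos, hookProd_starPartition hs hpos, prod_mul_distrib,
    prod_mul_distrib, show g + x + (y + p) + T.length = g + (x + p) + y + T.length by ring]
  set A := fun z => ∏ j ∈ range (g - 1), (g - (j + 1) + z + colLength T (j + 2))
  set C := g + (x + p) + y + T.length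
  set I := ∏ t ∈ range T.length, rowTailHookProd T t
  have hA : 0 < A x := prod_pos fun j hj => by have := mem_range.mp hj; omega
  have hCI : 0 < C * I := Nat.mul_pos (by omega)
    (prod_pos fun _ _ => prod_pos fun _ _ => hook_pos _ _ _)
  calc C * A x * x ! * ((∏ t ∈ range T.length, (firstColHook T t + (y + p))) * I * (y + p)!)
      = C * I * (A x * (x ! * (∏ t ∈ range T.length, (firstColHook T t + (y + p))) *
          (y + p)!)) := by ring
    _ < C * I * (A x * ((x + p)! * (∏ t ∈ range T.length, (firstColHook T t + y)) * y !)) :=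
      Nat.mul_lt_mul_of_pos_left (Nat.mul_lt_mul_of_pos_left key hA) hCI
    _ ≤ C * I * (A (x + p) * ((x + p)! * (∏ t ∈ range T.length, (firstColHook T t + y)) * y !)) :=
      Nat.mul_le_mul_left _ (Nat.mul_le_mul_right _ (prod_le_prod' fun j _ => by omega))
    _ = _ := by ring

end StarPartition

theorem stmt1_general (p m w n : ℕ) (hm : 1 ≤ m) (hmp : m < p)
    (hn : n = m + p * w) (γ : List ℕ)
    (hsort : γ.Pairwise (· ≥ ·)) (hpos : ∀ c ∈ γ, 0 < c) (hsum : γ.sum = m)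
    (a : ℕ) (ha1 : (w + 1) / 2 + 1 ≤ a) (ha2 : a ≤ w) :
    hookProd (starPartition γ ((a - 1) * p) ((w - a + 1) * p)) <
      hookProd (starPartition γ (a * p) ((w - a) * p)) ∧
    n.factorial / hookProd (starPartition γ (a * p) ((w - a) * p)) <
      n.factorial / hookProd (starPartition γ ((a - 1) * p) ((w - a + 1) * p)) := by
  obtain ⟨g, T, rfl⟩ := List.exists_cons_of_ne_nil (by rintro rfl; simp at hsum; omega : γ ≠ [])
  have hlt : hookProd (starPartition (g :: T) ((a - 1) * p) ((w - a + 1) * p)) <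
      hookProd (starPartition (g :: T) (a * p) ((w - a) * p)) := by
    obtain ⟨b, rfl⟩ : ∃ b, a = b + 1 := ⟨a - 1, by omega⟩
    rw [show (w - (b + 1) + 1) * p = (w - (b + 1)) * p + p by ring,
      show (b + 1) * p = b * p + p by ring, Nat.add_sub_cancel]
    refine hookProd_starPartition_lt hsort hpos (hsum ▸ hmp) ?_
    rw [← add_one_mul]
    exact Nat.mul_le_mul_right _ (by omega)
  have hdvd (x y : ℕ) (hxy : x + y = p * w) : hookProd (starPartition (g :: T) x y) ∣ n ! := by
    have := hookProd_dvd_factorial_sum (pairwise_starPartition hsort hpos x y)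
    rwa [sum_starPartition, hsum, add_assoc, hxy, ← hn] at this
  refine ⟨hlt, (Nat.div_lt_div_left n.factorial_ne_zero (hdvd _ _ ?_) (hdvd _ _ ?_)).mpr hlt⟩
  · rw [← add_mul, Nat.add_sub_cancel' ha2, mul_comm]
  · rw [← add_mul, show a - 1 + (w - a + 1) = w by omega, mul_comm]

/-- Lemma 3.3 of the paper. For a prime `p`, `1 ≤ m < p`, `n = m + pw`,
a partition `γ` of `m`, and `⌊(w+1)/2⌋ + 1 ≤ a ≤ w`, setting `λ = γ⋆(ap, (w-a)p)` and
`μ = γ⋆((a-1)p, (w-a+1)p)` one has `π(λ) > π(μ)`, equivalently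
`χ^λ(1) = n!/π(λ) < n!/π(μ) = χ^μ(1)`. -/
theorem stmt1 (p m w n : ℕ) (hp : p.Prime) (hm : 1 ≤ m) (hmp : m < p)
    (hn : n = m + p * w) (γ : List ℕ)
    (hsort : γ.Pairwise (· ≥ ·)) (hpos : ∀ c ∈ γ, 0 < c) (hsum : γ.sum = m)
    (a : ℕ) (ha1 : (w + 1) / 2 + 1 ≤ a) (ha2 : a ≤ w) :
    hookProd (starPartition γ ((a - 1) * p) ((w - a + 1) * p)) <
      hookProd (starPartition γ (a * p) ((w - a) * p)) ∧
    n.factorial / hookProd (starPartition γ (a * p) ((w - a) * p)) <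
      n.factorial / hookProd (starPartition γ ((a - 1) * p) ((w - a + 1) * p)) :=
  stmt1_general p m w n hm hmp hn γ hsort hpos hsum a ha1 ha2
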